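/- Let C be a real symmetric positive semidefinite d×d matrix with kernel K of dimension q, and let v_1,…,v_q be orthonormal vectors spanning a subspace K'. Let v_{q+1},…,v_d be an orthonormal eigenbasis of K^⊥ with eigenvalues α_{q+i} satisfying α_{q+i} ≥ α_{q+1} > 0 for each i, where α_{q+1} is the smallest nonzero eigenvalue of C. Then Σ_{j=1}^q Σ_{i=1}^{d−q} ⟨v_j, v_{q+i}⟩^2 ≤ (1/α_{q+1}) Σ_{j=1}^q Σ_{i=1}^{d−q} ‖C v_j‖. -/

import Mathlib

open Finset

/-- Let `C` be a symmetric positive semidefinite operator on `ℝ^d`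
with kernel of dimension `q`, `0 < q < d`. Let `u₁,…,u_q` be orthonormal vectors
and `w₁,…,w_{d−q}` an orthonormal eigenbasis of `(ker C)ᗮ` with eigenvalues
`α i ≥ α₀ > 0`, `α₀` the smallest nonzero eigenvalue. Then
`Σ_j Σ_i ⟨u_j, w_i⟩² ≤ (1/α₀) Σ_j Σ_i ‖C u_j‖`. -/
theorem inner_sq_le_inv_eigenvalue_mul_norm
    (d q : ℕ) (hq : 0 < q) (hqd : q < d)
    (C : EuclideanSpace ℝ (Fin d) →L[ℝ] EuclideanSpace ℝ (Fin d))
    (hCsymm : IsSelfAdjoint C)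
    (hCpsd : ∀ x : EuclideanSpace ℝ (Fin d), (0:ℝ) ≤ inner ℝ x (C x))
    (hker : Module.finrank ℝ (LinearMap.ker (C : EuclideanSpace ℝ (Fin d) →ₗ[ℝ]
        EuclideanSpace ℝ (Fin d))) = q)
    (u : Fin q → EuclideanSpace ℝ (Fin d)) (hu : Orthonormal ℝ u)
    (w : Fin (d - q) → EuclideanSpace ℝ (Fin d)) (hw : Orthonormal ℝ w)
    (hwspan : Submodule.span ℝ (Set.range w) =
      (LinearMap.ker (C : EuclideanSpace ℝ (Fin d) →ₗ[ℝ] EuclideanSpace ℝ (Fin d)))ᗮ)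
    (α : Fin (d - q) → ℝ) (heig : ∀ i, C (w i) = α i • w i)
    (α₀ : ℝ) (hα₀ : 0 < α₀) (hαge : ∀ i, α₀ ≤ α i) (hαmin : ∃ i, α i = α₀) :
    (∑ j : Fin q, ∑ i : Fin (d - q), (inner ℝ (u j) (w i) : ℝ) ^ 2) ≤
      (1 / α₀) * ∑ j : Fin q, ∑ i : Fin (d - q), ‖C (u j)‖ := by
  have hsym := (ContinuousLinearMap.isSelfAdjoint_iff_isSymmetric.mp hCsymm)
  rw [Finset.mul_sum]
  apply Finset.sum_le_sum
  intro j _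
  rw [Finset.mul_sum]
  apply Finset.sum_le_sum
  intro i _
  set x : ℝ := inner ℝ (u j) (w i) with hxdef
  set y : ℝ := inner ℝ (C (u j)) (w i) with hydef
  have h1 : ‖u j‖ = 1 := hu.1 j
  have h2 : ‖w i‖ = 1 := hw.1 i
  have hxy : α i * x = y := by
    rw [hydef,
      show (inner ℝ (C (u j)) (w i) : ℝ) = inner ℝ (u j) (C (w i)) from hsym (u j) (w i),
      heig i, real_inner_smul_right]
  have hx1 : |x| ≤ 1 := by
    have := abs_real_inner_le_norm (u j) (w i)
    rw [h1, h2] at this; simpa using this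
  have hy : |y| ≤ ‖C (u j)‖ := by
    have := abs_real_inner_le_norm (C (u j)) (w i)
    rw [h2] at this; simpa using this
  have h3 : y * x ≤ ‖C (u j)‖ := by
    calc y * x ≤ |y * x| := le_abs_self _
      _ = |y| * |x| := abs_mul _ _
      _ ≤ ‖C (u j)‖ * 1 := mul_le_mul hy hx1 (abs_nonneg _) (norm_nonneg _)
      _ = ‖C (u j)‖ := mul_one _
  have h4 : α₀ * x ^ 2 ≤ ‖C (u j)‖ := by
    calc α₀ * x ^ 2 ≤ α i * x ^ 2 := by nlinarith [sq_nonneg x, hαge i]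
      _ = y * x := by rw [← hxy]; ring
      _ ≤ _ := h3
  calc x ^ 2 = (1 / α₀) * (α₀ * x ^ 2) := by field_simp
    _ ≤ (1 / α₀) * ‖C (u j)‖ := by
        apply mul_le_mul_of_nonneg_left h4 (by positivity)
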